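/- Let G = K = ℤ/n with G acting on itself by conjugation (trivially, since abelian). The composite φ ∘ τ₁*: H³(G,𝕋) → MS_G(G) is, under the identifications H³(ℤ/n,𝕋) ≅ ℤ/n and MS_G(G) ≅ H⁴(Tot(B^{*,*}(ℤ/n × ℤ/n, ℤ))) ≅ ℤ/n generated by x⊗x, multiplication by 2: the generator x² ∈ H⁴(ℤ/n,ℤ) pulls back under μ* to x²⊗1 + 2x⊗x + 1⊗x², whose B-component is 2(x⊗x). In particular, for n odd this composite is an isomorphism, and for n even the class n/2 maps to zero. -/

import Mathlib

noncomputable section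

namespace Stmt19

/-- The circle group `𝕋 = ℝ/ℤ`, written additively. -/
abbrev 𝕋 : Type := AddCircle (1 : ℝ)

variable (n : ℕ) [NeZero n]

/-- `G = ℤ/n`, acting on itself by conjugation (i.e. trivially, since it is abelian). -/
abbrev A := ZMod n

/-- `C^{2,1}`-cochains. -/
abbrev C21 := A n → A n → A n → 𝕋
/-- `C^{1,2}`-cochains. -/
abbrev C12 := A n → A n → A n → 𝕋
/-- `C^{1,1}`-cochains. -/
abbrev C11 := A n → A n → 𝕋
/-- `C^{0,2}`-cochains. -/
abbrev C02 := A n → A n → 𝕋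
/-- `C^{3,1}`-cochains. -/
abbrev C31 := A n → A n → A n → A n → 𝕋
/-- `C^{2,2}`-cochains. -/
abbrev C22 := A n → A n → A n → A n → 𝕋
/-- Bar 3-cochains of `G = ℤ/n`. -/
abbrev C3G := A n → A n → A n → 𝕋
/-- Bar 4-cochains of `G = ℤ/n`. -/
abbrev C4G := A n → A n → A n → A n → 𝕋
/-- Bar 2-cochains of `G = ℤ/n`. -/
abbrev C2G := A n → A n → 𝕋

/-- `δ_G : C^{2,1} → C^{3,1}` (the conjugation action on `ℤ/n` is trivial). -/
def dG21 : C21 n →+ C31 n :=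
  AddMonoidHom.mk'
    (fun α g₁ g₂ g₃ k => α g₂ g₃ k - α (g₁ + g₂) g₃ k + α g₁ (g₂ + g₃) k - α g₁ g₂ k)
    (by intro a b; funext g₁ g₂ g₃ k; simp only [Pi.add_apply]; abel)

/-- `δ_K : C^{2,1} → C^{2,2}`. -/
def dK21 : C21 n →+ C22 n :=
  AddMonoidHom.mk'
    (fun α g₁ g₂ x y => α g₁ g₂ y - α g₁ g₂ (x + y) + α g₁ g₂ x)
    (by intro a b; funext g₁ g₂ x y; simp only [Pi.add_apply]; abel)

/-- `δ_G : C^{1,2} → C^{2,2}`. -/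
def dG12 : C12 n →+ C22 n :=
  AddMonoidHom.mk'
    (fun β g₁ g₂ x y => β g₂ x y - β (g₁ + g₂) x y + β g₁ x y)
    (by intro a b; funext g₁ g₂ x y; simp only [Pi.add_apply]; abel)

/-- `δ_G : C^{1,1} → C^{2,1}`. -/
def dG11 : C11 n →+ C21 n :=
  AddMonoidHom.mk'
    (fun χ g₁ g₂ k => χ g₂ k - χ (g₁ + g₂) k + χ g₁ k)
    (by intro a b; funext g₁ g₂ k; simp only [Pi.add_apply]; abel)

/-- `δ_K : C^{1,1} → C^{1,2}`. -/
def dK11 : C11 n →+ C12 n :=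
  AddMonoidHom.mk'
    (fun χ g x y => χ g y - χ g (x + y) + χ g x)
    (by intro a b; funext g x y; simp only [Pi.add_apply]; abel)

/-- `δ_G : C^{0,2} → C^{1,2}`; since the conjugation action of `ℤ/n` on itself is
trivial, `(δ_G κ)[g‖x,y] = κ(x,y) - κ(g•x, g•y) = κ(x,y) - κ(x,y)`. -/
def dG02 : C02 n →+ C12 n :=
  AddMonoidHom.mk'
    (fun κ _g x y => κ x y - κ x y)
    (by intro a b; funext g x y; simp only [Pi.add_apply]; abel)

/-- The degree 3 total differential of the truncated double complex
`A^{*,*}/A^{*,*>2}` (rows `q = 1, 2`). -/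
def d3t : (C21 n × C12 n) →+ (C31 n × C22 n) :=
  AddMonoidHom.mk' (fun t => (dG21 n t.1, dK21 n t.1 + dG12 n t.2))
    (by
      intro a b
      simp only [Prod.fst_add, Prod.snd_add, map_add, Prod.mk_add_mk, Prod.mk.injEq]
      constructor <;> first | trivial | abel)

/-- The degree 2 total differential of the truncated double complex. -/
def d2t : (C11 n × C02 n) →+ (C21 n × C12 n) :=
  AddMonoidHom.mk' (fun t => (dG11 n t.1, dG02 n t.2 - dK11 n t.1))
    (by
      intro a b
      simp only [Prod.fst_add, Prod.snd_add, map_add, Prod.mk_add_mk, Prod.mk.injEq]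
      constructor <;> first | trivial | abel)

/-- Normalized pairs `(α, β)`. -/
def nrm3 : AddSubgroup (C21 n × C12 n) where
  carrier := {t | (∀ g₁ g₂ k, (g₁ = 0 ∨ g₂ = 0 ∨ k = 0) → t.1 g₁ g₂ k = 0) ∧
    (∀ g x y, (g = 0 ∨ x = 0 ∨ y = 0) → t.2 g x y = 0)}
  add_mem' := by
    intro a b ha hb
    refine ⟨fun g₁ g₂ k h => ?_, fun g x y h => ?_⟩
    · simp [Prod.fst_add, Pi.add_apply, ha.1 g₁ g₂ k h, hb.1 g₁ g₂ k h]
    · simp [Prod.snd_add, Pi.add_apply, ha.2 g x y h, hb.2 g x y h]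
  zero_mem' := ⟨fun _ _ _ _ => rfl, fun _ _ _ _ => rfl⟩
  neg_mem' := by
    intro a ha
    refine ⟨fun g₁ g₂ k h => ?_, fun g x y h => ?_⟩
    · simp [Pi.neg_apply, ha.1 g₁ g₂ k h]
    · simp [Pi.neg_apply, ha.2 g x y h]

/-- Normalized pairs `(χ, κ)`. -/
def nrm2 : AddSubgroup (C11 n × C02 n) where
  carrier := {t | (∀ g k, (g = 0 ∨ k = 0) → t.1 g k = 0) ∧
    (∀ x y, (x = 0 ∨ y = 0) → t.2 x y = 0)}
  add_mem' := by
    intro a b ha hb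
    refine ⟨fun g k h => ?_, fun x y h => ?_⟩
    · simp [Prod.fst_add, Pi.add_apply, ha.1 g k h, hb.1 g k h]
    · simp [Prod.snd_add, Pi.add_apply, ha.2 x y h, hb.2 x y h]
  zero_mem' := ⟨fun _ _ _ => rfl, fun _ _ _ => rfl⟩
  neg_mem' := by
    intro a ha
    refine ⟨fun g k h => ?_, fun x y h => ?_⟩
    · simp [Pi.neg_apply, ha.1 g k h]
    · simp [Pi.neg_apply, ha.2 x y h]

/-- Degree 3 normalized cocycles of the truncated total complex. -/
def Z3t : AddSubgroup (C21 n × C12 n) := nrm3 n ⊓ (d3t n).ker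

/-- Degree 3 normalized coboundaries of the truncated total complex. -/
def B3t : AddSubgroup (C21 n × C12 n) := AddSubgroup.map (d2t n) (nrm2 n)

/-- `H³(Tot^*(A^{*,*}/A^{*,*>2}))`. -/
abbrev H3t := Z3t n ⧸ (B3t n).addSubgroupOf (Z3t n)

/-- `δ : C²(G,𝕋) → C³(G,𝕋)`, the bar differential of `G = ℤ/n`. -/
def dG2 : C2G n →+ C3G n :=
  AddMonoidHom.mk'
    (fun u a b c => u b c - u (a + b) c + u a (b + c) - u a b)
    (by intro a b; funext x y z; simp only [Pi.add_apply]; abel)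

/-- `δ : C³(G,𝕋) → C⁴(G,𝕋)`, the bar differential of `G = ℤ/n`. -/
def dG3 : C3G n →+ C4G n :=
  AddMonoidHom.mk'
    (fun w a b c d => w b c d - w (a + b) c d + w a (b + c) d - w a b (c + d) + w a b c)
    (by intro a b; funext x y z u; simp only [Pi.add_apply]; abel)

/-- Normalized 3-cochains of `G`. -/
def nrm3G : AddSubgroup (C3G n) where
  carrier := {w | ∀ a b c, (a = 0 ∨ b = 0 ∨ c = 0) → w a b c = 0}
  add_mem' := by intro a b ha hb x y z h; simp [Pi.add_apply, ha x y z h, hb x y z h]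
  zero_mem' := fun _ _ _ _ => rfl
  neg_mem' := by intro a ha x y z h; simp [Pi.neg_apply, ha x y z h]

/-- Normalized 2-cochains of `G`. -/
def nrm2G : AddSubgroup (C2G n) where
  carrier := {u | ∀ a b, (a = 0 ∨ b = 0) → u a b = 0}
  add_mem' := by intro a b ha hb x y h; simp [Pi.add_apply, ha x y h, hb x y h]
  zero_mem' := fun _ _ _ => rfl
  neg_mem' := by intro a ha x y h; simp [Pi.neg_apply, ha x y h]

/-- Normalized 3-cocycles of `G = ℤ/n`. -/
def Z3G : AddSubgroup (C3G n) := nrm3G n ⊓ (dG3 n).ker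

/-- Normalized 3-coboundaries of `G = ℤ/n`. -/
def B3G : AddSubgroup (C3G n) := AddSubgroup.map (dG2 n) (nrm2G n)

/-- `H³(G,𝕋) = H³(ℤ/n, 𝕋)`. -/
abbrev H3G := Z3G n ⧸ (B3G n).addSubgroupOf (Z3G n)

/-- The multiplicative-structure condition `[δ_K β] = 1`: there is a normalized
0-cochain `θ ∈ C⁰_G(K³,𝕋)` with `δ_G θ = δ_K β` (the conjugation action being trivial,
`(δ_G θ)[g‖x,y,z] = θ(x,y,z) - θ(x,y,z)`). -/
def Wms : AddSubgroup (C21 n × C12 n) where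
  carrier := {t | t ∈ Z3t n ∧ ∃ θ : A n → A n → A n → 𝕋,
    ∀ g x y z, t.2 g y z - t.2 g (x + y) z + t.2 g x (y + z) - t.2 g x y =
      θ x y z - θ x y z}
  add_mem' := by
    intro a b ha hb
    refine ⟨(Z3t n).add_mem ha.1 hb.1, 0, fun g x y z => ?_⟩
    obtain ⟨θa, hθa⟩ := ha.2
    obtain ⟨θb, hθb⟩ := hb.2
    have h1 := hθa g x y z
    have h2 := hθb g x y z
    simp only [sub_self] at h1 h2 ⊢
    have : (a + b).2 g y z - (a + b).2 g (x + y) z + (a + b).2 g x (y + z) -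
        (a + b).2 g x y =
        (a.2 g y z - a.2 g (x + y) z + a.2 g x (y + z) - a.2 g x y) +
        (b.2 g y z - b.2 g (x + y) z + b.2 g x (y + z) - b.2 g x y) := by
      simp only [Prod.snd_add, Pi.add_apply]; abel
    rw [this, h1, h2, add_zero]
  zero_mem' := ⟨(Z3t n).zero_mem, 0, by intro g x y z; simp⟩
  neg_mem' := by
    intro a ha
    refine ⟨(Z3t n).neg_mem ha.1, 0, fun g x y z => ?_⟩
    obtain ⟨θa, hθa⟩ := ha.2
    have h1 := hθa g x y z
    simp only [sub_self] at h1 ⊢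
    have : (-a).2 g y z - (-a).2 g (x + y) z + (-a).2 g x (y + z) - (-a).2 g x y =
        -(a.2 g y z - a.2 g (x + y) z + a.2 g x (y + z) - a.2 g x y) := by
      simp only [Prod.snd_neg, Pi.neg_apply]; abel
    rw [this, h1, neg_zero]

/-- The group `MS_G(G)` of multiplicative structures, as a subgroup of
`H³(Tot^*(A^{*,*}/A^{*,*>2}))`. -/
def MS : AddSubgroup (H3t n) :=
  AddSubgroup.map (QuotientAddGroup.mk' ((B3t n).addSubgroupOf (Z3t n)))
    ((Wms n).addSubgroupOf (Z3t n))

/-- The Dijkgraaf–Pasquier–Roche cochain `α_w` for `G = ℤ/n` (conjugation trivial):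
`α_w[g|h‖x] = w[g|h|x] + w[x|g|h] - w[g|x|h]`. -/
def alphaW (w : C3G n) : C21 n := fun g h x => w g h x + w x g h - w g x h

/-- The Dijkgraaf–Pasquier–Roche cochain `β_w` for `G = ℤ/n` (conjugation trivial):
`β_w[g‖x|y] = w[g|x|y] + w[x|y|g] - w[x|g|y]`. -/
def betaW (w : C3G n) : C12 n := fun g x y => w g x y + w x y g - w x g y

/-!
Both groups are identified with the `n`-torsion of `𝕋` by evaluating on the generator `1`:
a normalized 3-cocycle `w` gives `∑ₓ w[1|x|1]`, a pair `(α, β)` gives `∑ₓ (β[1‖x|1] + α[x|1‖1])`.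
For cocycles of a cyclic group, induction on the last argument writes any cocycle as a coboundary
plus a multiple of the carry cocycle, so these sums are `n`-torsion, vanish exactly on
coboundaries, and take every torsion value. For the pairs one first kills `α`, using that
`H²(ℤ/n, 𝕋) = 0` because `𝕋` is divisible; then `β` is additive in `g`.
On the Dijkgraaf–Pasquier–Roche pair both `β_w[1‖x|1]` and `α_w[x|1‖1]` reduce to `w[1|x|1]`,
so its invariant is twice that of `w`: this is the `2 (x ⊗ x)` in
`μ^* x² = x² ⊗ 1 + 2 x ⊗ x + 1 ⊗ x²`.
-/

open Finset AddSubgroup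

section CyclicCocycles

variable {N : ℕ} {M : Type*} [AddCommGroup M]

lemma natCast_eq_nsmul_of_map_add {f : ZMod N → M} (hf : ∀ a b, f (a + b) = f a + f b)
    (k : ℕ) : f k = k • f 1 := by
  simpa using map_nsmul (AddMonoidHom.mk' f hf) k 1

lemma nsmul_map_one_of_map_add {f : ZMod N → M} (hf : ∀ a b, f (a + b) = f a + f b) :
    N • f 1 = 0 := by
  rw [← natCast_eq_nsmul_of_map_add hf, ZMod.natCast_self]
  exact map_zero (AddMonoidHom.mk' f hf)

lemma val_one_nsmul {t : M} (ht : N • t = 0) : (1 : ZMod N).val • t = t := by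
  rw [ZMod.val_one_eq_one_mod, ← nsmul_eq_mod_nsmul 1 ht, one_nsmul]

def cyclicPrimitive (c : ZMod N → ZMod N → M) (m : M) (g : ZMod N) : M :=
  g.val • m - ∑ j ∈ range g.val, c j 1

@[simp]
lemma cyclicPrimitive_zero (c : ZMod N → ZMod N → M) (m : M) : cyclicPrimitive c m 0 = 0 := by
  simp [cyclicPrimitive]

variable [NeZero N]

lemma eq_val_nsmul_of_map_add {f : ZMod N → M} (hf : ∀ a b, f (a + b) = f a + f b)
    (a : ZMod N) : f a = a.val • f 1 := by
  simpa using natCast_eq_nsmul_of_map_add hf a.val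

lemma natCast_val_add_natCast (x : ZMod N) (k : ℕ) : ((x.val + k : ℕ) : ZMod N) = x + k := by
  push_cast [ZMod.natCast_zmod_val]; rfl

lemma sum_range_natCast (f : ZMod N → M) : ∑ j ∈ range N, f j = ∑ z, f z := by
  refine sum_nbij' (fun j => (j : ZMod N)) ZMod.val (by simp) (by simp [ZMod.val_lt]) ?_ ?_ ?_
  · intro j hj; simp_all [Nat.mod_eq_of_lt]
  · intro z _; simp
  · intro j _; rfl

lemma sum_range_add_mul_self (f : ZMod N → M) (k m : ℕ) :
    ∑ j ∈ range (k + N * m), f j = ∑ j ∈ range k, f j + m • ∑ z, f z := by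
  induction m with
  | zero => simp
  | succ m ih =>
    have hshift : ∑ j ∈ range N, f ((k + N * m + j : ℕ) : ZMod N) = ∑ z, f z := by
      push_cast
      rw [sum_range_natCast fun z => f ((k + N * m : ZMod N) + z)]
      exact Fintype.sum_equiv (Equiv.addLeft _) _ _ fun _ => rfl
    rw [Nat.mul_succ, ← add_assoc, sum_range_add, ih, hshift, succ_nsmul, add_assoc]

def carry (a b : ZMod N) : ℕ := if N ≤ a.val + b.val then 1 else 0

lemma val_add_val_eq (a b : ZMod N) : a.val + b.val = (a + b).val + N * carry a b := by
  unfold carry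
  split_ifs with h
  · rw [ZMod.val_add_val_of_le h, mul_one]
  · rw [ZMod.val_add_of_lt (not_le.mp h), mul_zero, add_zero]

lemma carry_add_carry (a b c : ZMod N) :
    carry b c + carry a (b + c) = carry a b + carry (a + b) c := by
  have h₁ := val_add_val_eq b c
  have h₂ := val_add_val_eq a (b + c)
  have h₃ := val_add_val_eq a b
  have h₄ := val_add_val_eq (a + b) c
  rw [← add_assoc] at h₂
  refine Nat.eq_of_mul_eq_mul_left (NeZero.pos N) ?_
  linarith

@[simp]
lemma carry_zero_left (b : ZMod N) : carry 0 b = 0 := by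
  simp [carry, (ZMod.val_lt b).not_ge]

@[simp]
lemma carry_zero_right (a : ZMod N) : carry a 0 = 0 := by
  simp [carry, (ZMod.val_lt a).not_ge]

lemma sum_carry (b : ZMod N) : ∑ a, carry a b = b.val := by
  have h : ∑ a : ZMod N, (a.val + b.val) = ∑ a, ((a + b).val + N * carry a b) :=
    sum_congr rfl fun a _ => val_add_val_eq a b
  have hshift : ∑ a : ZMod N, (a + b).val = ∑ a : ZMod N, a.val :=
    Fintype.sum_equiv (Equiv.addRight b) _ _ fun _ => rfl
  rw [sum_add_distrib, sum_add_distrib, sum_const, card_univ, ZMod.card, smul_eq_mul, ← mul_sum,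
    hshift] at h
  exact (Nat.eq_of_mul_eq_mul_left (NeZero.pos N) (by linarith)).symm

lemma val_add_nsmul {t : M} (ht : N • t = 0) (a b : ZMod N) :
    (a + b).val • t = a.val • t + b.val • t := by
  rw [← add_nsmul, val_add_val_eq, add_nsmul, mul_nsmul, ht, smul_zero, add_zero]

lemma twoCocycle_eq {c : ZMod N → ZMod N → M} (h0 : ∀ x, c x 0 = 0)
    (hc : ∀ x y z, c y z - c (x + y) z + c x (y + z) - c x y = 0) (x y : ZMod N) :
    c x y = ∑ j ∈ range (x + y).val, c j 1 - ∑ j ∈ range x.val, c j 1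
      - ∑ j ∈ range y.val, c j 1 + carry x y • ∑ z, c z 1 := by
  have key : ∀ k : ℕ, c x k = ∑ j ∈ range (x.val + k), c j 1 - ∑ j ∈ range x.val, c j 1
      - ∑ j ∈ range k, c j 1 := by
    intro k
    induction k with
    | zero => simp [h0]
    | succ k ih =>
      have hstep := hc x k 1
      rw [← add_assoc, sum_range_succ, sum_range_succ, natCast_val_add_natCast, Nat.cast_succ]
      linear_combination (norm := abel) hstep + ih
  have hy := key y.val
  rwa [ZMod.natCast_zmod_val, val_add_val_eq, sum_range_add_mul_self (c · 1), add_sub_right_comm,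
    add_sub_right_comm] at hy

lemma cyclicPrimitive_coboundary {c : ZMod N → ZMod N → M} (h0 : ∀ x, c x 0 = 0)
    (hc : ∀ x y z, c y z - c (x + y) z + c x (y + z) - c x y = 0) {m : M}
    (hm : N • m = ∑ z, c z 1) (x y : ZMod N) :
    cyclicPrimitive c m y - cyclicPrimitive c m (x + y) + cyclicPrimitive c m x = c x y := by
  have hval : x.val • m + y.val • m = (x + y).val • m + carry x y • ∑ z, c z 1 := by
    rw [← add_nsmul, val_add_val_eq, add_nsmul, mul_nsmul, hm]
  rw [twoCocycle_eq h0 hc x y]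
  simp only [cyclicPrimitive]
  linear_combination (norm := abel) hval

lemma threeCocycle_eq_aux {w : ZMod N → ZMod N → ZMod N → M} (h0 : ∀ a b, w a b 0 = 0)
    (hw : ∀ a b c d, w b c d - w (a + b) c d + w a (b + c) d - w a b (c + d) + w a b c = 0)
    (a b : ZMod N) (k : ℕ) :
    w a b k = ∑ j ∈ range k, w b j 1 - ∑ j ∈ range k, w (a + b) j 1
      + ∑ j ∈ range (b.val + k), w a j 1 - ∑ j ∈ range b.val, w a j 1 := by
  induction k with
  | zero => simp [h0]
  | succ k ih =>
    have hstep := hw a b k 1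
    rw [← add_assoc, sum_range_succ, sum_range_succ, sum_range_succ, natCast_val_add_natCast,
      Nat.cast_succ]
    linear_combination (norm := abel) ih - hstep

lemma sum_threeCocycle_add_left {w : ZMod N → ZMod N → ZMod N → M} (h0 : ∀ a b, w a b 0 = 0)
    (hw : ∀ a b c d, w b c d - w (a + b) c d + w a (b + c) d - w a b (c + d) + w a b c = 0)
    (a b : ZMod N) : ∑ z, w (a + b) z 1 = ∑ z, w a z 1 + ∑ z, w b z 1 := by
  have h := threeCocycle_eq_aux h0 hw a b N
  have hsplit := sum_range_add_mul_self (w a · 1) b.val 1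
  rw [mul_one, one_nsmul] at hsplit
  rw [ZMod.natCast_self, h0, sum_range_natCast (w b · 1), sum_range_natCast (w (a + b) · 1),
    hsplit] at h
  linear_combination (norm := abel) h

lemma threeCocycle_eq {w : ZMod N → ZMod N → ZMod N → M} (h0 : ∀ a b, w a b 0 = 0)
    (hw : ∀ a b c d, w b c d - w (a + b) c d + w a (b + c) d - w a b (c + d) + w a b c = 0)
    (a b c : ZMod N) :
    w a b c = ∑ j ∈ range c.val, w b j 1 - ∑ j ∈ range c.val, w (a + b) j 1
      + ∑ j ∈ range (b + c).val, w a j 1 - ∑ j ∈ range b.val, w a j 1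
      + (a.val * carry b c) • ∑ z, w 1 z 1 := by
  have h := threeCocycle_eq_aux h0 hw a b c.val
  rw [ZMod.natCast_zmod_val, val_add_val_eq, sum_range_add_mul_self (w a · 1),
    eq_val_nsmul_of_map_add (f := fun a => ∑ z, w a z 1) (sum_threeCocycle_add_left h0 hw) a,
    ← mul_nsmul] at h
  rw [h]
  abel

def carryCocycle (t : M) (a b c : ZMod N) : M := (a.val * carry b c) • t

lemma carryCocycle_eq_zero (t : M) {a b c : ZMod N} (h : a = 0 ∨ b = 0 ∨ c = 0) :
    carryCocycle t a b c = 0 := by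
  rcases h with rfl | rfl | rfl <;> simp [carryCocycle]

lemma carryCocycle_add_left {t : M} (ht : N • t = 0) (a b x y : ZMod N) :
    carryCocycle t (a + b) x y = carryCocycle t a x y + carryCocycle t b x y := by
  simp only [carryCocycle, mul_nsmul, val_add_nsmul ht, smul_add]

lemma carryCocycle_cocycle (t : M) (g x y z : ZMod N) :
    carryCocycle t g y z - carryCocycle t g (x + y) z + carryCocycle t g x (y + z)
      - carryCocycle t g x y = 0 := by
  have h : (g.val * (carry y z + carry x (y + z))) • t
      = (g.val * (carry x y + carry (x + y) z)) • t := by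
    rw [carry_add_carry]
  simp only [mul_add, add_nsmul] at h
  simp only [carryCocycle]
  linear_combination (norm := abel) h

lemma sum_carryCocycle {t : M} (ht : N • t = 0) : ∑ z : ZMod N, carryCocycle t 1 z 1 = t := by
  simp only [carryCocycle, mul_nsmul, val_one_nsmul ht]
  rw [← sum_smul, sum_carry, val_one_nsmul ht]

end CyclicCocycles
section Torsion

variable {N : ℕ} [NeZero N]

lemma toAddCircle_mem_torsionBy (k : ZMod N) : ZMod.toAddCircle k ∈ torsionBy 𝕋 N := by
  rw [torsionBy.nsmul_iff, ← map_nsmul, nsmul_eq_mul, ZMod.natCast_self, zero_mul, map_zero]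

def zmodEquivTorsion : ZMod N ≃+ torsionBy 𝕋 N :=
  AddEquiv.ofBijective (ZMod.toAddCircle.codRestrict _ toAddCircle_mem_torsionBy) <| by
    refine ⟨fun j k h => ZMod.toAddCircle_injective N (congrArg Subtype.val h), ?_⟩
    rintro ⟨x, hx⟩
    rw [torsionBy.nsmul_iff] at hx
    obtain ⟨r, rfl⟩ := QuotientAddGroup.mk_surjective x
    rw [← AddCircle.coe_nsmul, AddCircle.coe_eq_zero_iff] at hx
    obtain ⟨m, hm⟩ := hx
    refine ⟨m, Subtype.ext ?_⟩
    change ZMod.toAddCircle (m : ZMod N) = (r : 𝕋)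
    rw [ZMod.toAddCircle_intCast]
    congr 1
    rw [zsmul_one, nsmul_eq_mul] at hm
    rw [hm, mul_div_cancel_left₀ _ (Nat.cast_ne_zero.mpr (NeZero.ne N))]

def equivZModOfBijective {Q : Type*} [AddCommGroup Q] (φ : Q →+ torsionBy 𝕋 N)
    (hφ : Function.Bijective φ) : Q ≃+ ZMod N :=
  (AddEquiv.ofBijective φ hφ).trans zmodEquivTorsion.symm

lemma toAddCircle_equivZModOfBijective {Q : Type*} [AddCommGroup Q] (φ : Q →+ torsionBy 𝕋 N)
    (hφ : Function.Bijective φ) (q : Q) :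
    ZMod.toAddCircle (equivZModOfBijective φ hφ q) = φ q :=
  congrArg Subtype.val (zmodEquivTorsion.apply_symm_apply (φ q))

end Torsion

section Membership

variable {N : ℕ}

lemma mem_Z3G_iff (w : C3G N) : w ∈ Z3G N ↔
    (∀ a b c, (a = 0 ∨ b = 0 ∨ c = 0) → w a b c = 0) ∧
      ∀ a b c d, w b c d - w (a + b) c d + w a (b + c) d - w a b (c + d) + w a b c = 0 := by
  simp only [Z3G, AddSubgroup.mem_inf, AddMonoidHom.mem_ker, funext_iff]
  rfl

lemma mem_Z3t_iff (z : C21 N × C12 N) : z ∈ Z3t N ↔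
    ((∀ g₁ g₂ k, (g₁ = 0 ∨ g₂ = 0 ∨ k = 0) → z.1 g₁ g₂ k = 0) ∧
      (∀ g x y, (g = 0 ∨ x = 0 ∨ y = 0) → z.2 g x y = 0)) ∧
    (∀ g₁ g₂ g₃ k, z.1 g₂ g₃ k - z.1 (g₁ + g₂) g₃ k + z.1 g₁ (g₂ + g₃) k - z.1 g₁ g₂ k = 0) ∧
    ∀ g₁ g₂ x y, z.1 g₁ g₂ y - z.1 g₁ g₂ (x + y) + z.1 g₁ g₂ x
      + (z.2 g₂ x y - z.2 (g₁ + g₂) x y + z.2 g₁ x y) = 0 := by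
  simp only [Z3t, AddSubgroup.mem_inf, AddMonoidHom.mem_ker, Prod.ext_iff, funext_iff]
  rfl

lemma mem_Wms_iff (z : C21 N × C12 N) : z ∈ Wms N ↔ z ∈ Z3t N ∧
    ∀ g x y y', z.2 g y y' - z.2 g (x + y) y' + z.2 g x (y + y') - z.2 g x y = 0 := by
  refine and_congr_right fun _ => ⟨fun ⟨θ, hθ⟩ g x y y' => ?_, fun h => ⟨0, fun g x y y' => ?_⟩⟩
  · rw [hθ, sub_self]
  · rw [h, sub_self]

lemma mk_mem_MS {z : Z3t N} (hz : (z : C21 N × C12 N) ∈ Wms N) :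
    (QuotientAddGroup.mk z : H3t N) ∈ MS N :=
  ⟨z, mem_addSubgroupOf.2 hz, rfl⟩

lemma d2t_mem_Wms {t : C11 N × C02 N} (ht : t ∈ nrm2 N) : d2t N t ∈ Wms N := by
  obtain ⟨χ, κ⟩ := t
  have hχ₁ : ∀ k, χ 0 k = 0 := fun k => ht.1 0 k (Or.inl rfl)
  have hχ₂ : ∀ g, χ g 0 = 0 := fun g => ht.1 g 0 (Or.inr rfl)
  refine (mem_Wms_iff _).2 ⟨(mem_Z3t_iff _).2 ⟨⟨?_, ?_⟩, ?_, ?_⟩, ?_⟩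
  · intro g₁ g₂ k h
    change χ g₂ k - χ (g₁ + g₂) k + χ g₁ k = 0
    rcases h with rfl | rfl | rfl <;> simp [hχ₁, hχ₂]
  · intro g x y h
    change κ x y - κ x y - (χ g y - χ g (x + y) + χ g x) = 0
    rcases h with rfl | rfl | rfl <;> simp [hχ₁, hχ₂]
  all_goals
    intros
    simp only [d2t, dG11, dG02, dK11, AddMonoidHom.mk'_apply, Pi.sub_apply, add_assoc]
    abel

lemma snd_add_left_of_fst_eq_zero {z : C21 N × C12 N} (hz : z ∈ Z3t N) (h1 : z.1 = 0)
    (x y a b : ZMod N) : z.2 (a + b) x y = z.2 a x y + z.2 b x y := by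
  have h := ((mem_Z3t_iff z).1 hz).2.2 a b x y
  simp only [h1, Pi.zero_apply, sub_zero, add_zero, zero_add] at h
  linear_combination (norm := abel) -h

lemma nsmul_snd_one_of_fst_eq_zero {z : C21 N × C12 N} (hz : z ∈ Z3t N) (h1 : z.1 = 0)
    (x y : ZMod N) : N • z.2 1 x y = 0 :=
  nsmul_map_one_of_map_add (f := (z.2 · x y)) (snd_add_left_of_fst_eq_zero hz h1 x y)

end Membership

section GroupCohomology

variable (N : ℕ) [NeZero N]

def cocycleInvariant : C3G N →+ 𝕋 where
  toFun w := ∑ z, w 1 z 1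
  map_zero' := sum_const_zero
  map_add' _ _ := sum_add_distrib

lemma cocycleInvariant_mem_torsionBy {w : C3G N} (hw : w ∈ Z3G N) :
    cocycleInvariant N w ∈ torsionBy 𝕋 N := by
  obtain ⟨h0, hc⟩ := (mem_Z3G_iff w).1 hw
  rw [torsionBy.nsmul_iff]
  exact nsmul_map_one_of_map_add (f := fun a => ∑ z, w a z 1)
    (sum_threeCocycle_add_left (fun a b => h0 a b 0 (by simp)) hc)

lemma cocycleInvariant_dG2 (u : C2G N) : cocycleInvariant N (dG2 N u) = 0 := by
  have h₁ : ∑ z : ZMod N, u (1 + z) 1 = ∑ z, u z 1 :=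
    Fintype.sum_equiv (Equiv.addLeft 1) _ _ fun _ => rfl
  have h₂ : ∑ z : ZMod N, u 1 (z + 1) = ∑ z, u 1 z :=
    Fintype.sum_equiv (Equiv.addRight 1) _ _ fun _ => rfl
  change ∑ z, (u z 1 - u (1 + z) 1 + u 1 (z + 1) - u 1 z) = 0
  rw [sum_sub_distrib, sum_add_distrib, sum_sub_distrib, h₁, h₂]
  abel

lemma carryCocycle_mem_Z3G {t : 𝕋} (ht : N • t = 0) : (carryCocycle t : C3G N) ∈ Z3G N := by
  refine (mem_Z3G_iff _).2 ⟨fun a b c h => carryCocycle_eq_zero t h, fun a b c d => ?_⟩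
  have h₁ := carryCocycle_add_left ht a b c d
  have h₂ := carryCocycle_cocycle t a b c d
  linear_combination (norm := abel) -h₁ - h₂

lemma mem_B3G_of_cocycleInvariant_eq_zero {w : C3G N} (hw : w ∈ Z3G N)
    (h : cocycleInvariant N w = 0) : w ∈ B3G N := by
  obtain ⟨h0, hc⟩ := (mem_Z3G_iff w).1 hw
  refine ⟨fun a b => ∑ j ∈ range b.val, w a j 1, fun a b hab => ?_, ?_⟩
  · rcases hab with rfl | rfl
    · exact sum_eq_zero fun j _ => h0 0 _ 1 (Or.inl rfl)
    · simp
  · funext a b c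
    have hnf := threeCocycle_eq (fun a b => h0 a b 0 (by simp)) hc a b c
    rw [show ∑ z, w 1 z 1 = 0 from h, smul_zero, add_zero] at hnf
    exact hnf.symm

def H3GInvariant : H3G N →+ torsionBy 𝕋 N :=
  QuotientAddGroup.lift _ (((cocycleInvariant N).comp (Z3G N).subtype).codRestrict _
    fun w => cocycleInvariant_mem_torsionBy N w.2) <| by
      intro w hB
      obtain ⟨u, -, hu⟩ := mem_addSubgroupOf.1 hB
      refine AddMonoidHom.mem_ker.2 (Subtype.ext ?_)
      change cocycleInvariant N w = 0
      rw [← hu, cocycleInvariant_dG2]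

lemma H3GInvariant_bijective : Function.Bijective (H3GInvariant N) := by
  refine ⟨(injective_iff_map_eq_zero _).2 fun q hq => ?_, fun t => ?_⟩
  · obtain ⟨w, rfl⟩ := QuotientAddGroup.mk_surjective q
    exact (QuotientAddGroup.eq_zero_iff w).2 <| mem_addSubgroupOf.2 <|
      mem_B3G_of_cocycleInvariant_eq_zero N w.2 (congrArg Subtype.val hq)
  · have ht := torsionBy.nsmul_iff.1 t.2
    exact ⟨QuotientAddGroup.mk ⟨_, carryCocycle_mem_Z3G N ht⟩,
      Subtype.ext (sum_carryCocycle ht)⟩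

def H3GEquiv : H3G N ≃+ ZMod N := equivZModOfBijective _ (H3GInvariant_bijective N)

lemma toAddCircle_H3GEquiv_mk (w : Z3G N) :
    ZMod.toAddCircle (H3GEquiv N (QuotientAddGroup.mk w)) = cocycleInvariant N w :=
  toAddCircle_equivZModOfBijective _ _ _

end GroupCohomology

section MultiplicativeStructures

variable (N : ℕ) [NeZero N]

def totalInvariant : (C21 N × C12 N) →+ 𝕋 where
  toFun z := ∑ x, (z.2 1 x 1 + z.1 x 1 1)
  map_zero' := by simp
  map_add' _ _ := by
    simp only [Prod.fst_add, Prod.snd_add, Pi.add_apply, ← sum_add_distrib, add_add_add_comm]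

lemma totalInvariant_d2t (t : C11 N × C02 N) : totalInvariant N (d2t N t) = 0 := by
  obtain ⟨χ, κ⟩ := t
  have h₁ : ∑ x : ZMod N, χ 1 (x + 1) = ∑ x, χ 1 x :=
    Fintype.sum_equiv (Equiv.addRight 1) _ _ fun _ => rfl
  have h₂ : ∑ x : ZMod N, χ (x + 1) 1 = ∑ x, χ x 1 :=
    Fintype.sum_equiv (Equiv.addRight 1) _ _ fun _ => rfl
  have hterm : ∀ x : ZMod N, κ x 1 - κ x 1 - (χ 1 1 - χ 1 (x + 1) + χ 1 x)
      + (χ 1 1 - χ (x + 1) 1 + χ x 1) = (χ 1 (x + 1) - χ 1 x) - (χ (x + 1) 1 - χ x 1) := by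
    intro x; abel
  change ∑ x, (κ x 1 - κ x 1 - (χ 1 1 - χ 1 (x + 1) + χ 1 x)
      + (χ 1 1 - χ (x + 1) 1 + χ x 1)) = 0
  rw [sum_congr rfl fun x _ => hterm x, sum_sub_distrib, sum_sub_distrib, sum_sub_distrib, h₁, h₂,
    sub_self, sub_self, sub_self]

lemma totalInvariant_of_fst_eq_zero {z : C21 N × C12 N} (h : z.1 = 0) :
    totalInvariant N z = cocycleInvariant N z.2 := by
  simp [totalInvariant, cocycleInvariant, h]

lemma exists_sub_d2t_fst_eq_zero {z : C21 N × C12 N} (hz : z ∈ Z3t N) :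
    ∃ t ∈ nrm2 N, (z - d2t N t).1 = 0 := by
  obtain ⟨⟨h0, -⟩, hc, -⟩ := (mem_Z3t_iff z).1 hz
  have hdiv : ∀ s : 𝕋, N • DivisibleBy.div s (N : ℤ) = s := fun s => by
    rw [← natCast_zsmul, DivisibleBy.div_cancel s (Nat.cast_ne_zero.2 (NeZero.ne N))]
  -- `DivisibleBy.div 0 N` need not vanish, so `χ` is normalized in `k` by hand.
  let χ : C11 N := fun g k =>
    if k = 0 then 0 else cyclicPrimitive (z.1 · · k) (DivisibleBy.div (∑ x, z.1 x 1 k) (N : ℤ)) g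
  refine ⟨(χ, 0), ⟨fun g k h => ?_, fun _ _ _ => rfl⟩, ?_⟩
  · rcases h with rfl | rfl <;> simp [χ]
  · funext g₁ g₂ k
    change z.1 g₁ g₂ k - (χ g₂ k - χ (g₁ + g₂) k + χ g₁ k) = 0
    by_cases hk : k = 0
    · simp [χ, hk, h0]
    · simp only [χ, if_neg hk]
      rw [cyclicPrimitive_coboundary (fun x => h0 x 0 k (by simp)) (fun x y y' => hc x y y' k)
        (hdiv _), sub_self]

lemma snd_eq_val_nsmul_of_fst_eq_zero {z : C21 N × C12 N} (hz : z ∈ Z3t N) (h1 : z.1 = 0)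
    (g x y : ZMod N) : z.2 g x y = g.val • z.2 1 x y :=
  eq_val_nsmul_of_map_add (f := (z.2 · x y)) (snd_add_left_of_fst_eq_zero hz h1 x y) g

lemma totalInvariant_mem_torsionBy {z : C21 N × C12 N} (hz : z ∈ Z3t N) :
    totalInvariant N z ∈ torsionBy 𝕋 N := by
  obtain ⟨t, ht, h1⟩ := exists_sub_d2t_fst_eq_zero N hz
  have hy : z - d2t N t ∈ Z3t N := sub_mem hz ((mem_Wms_iff _).1 (d2t_mem_Wms ht)).1
  have h := congrArg (totalInvariant N) (sub_add_cancel z (d2t N t))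
  rw [map_add, totalInvariant_d2t, add_zero, totalInvariant_of_fst_eq_zero N h1] at h
  rw [← h, torsionBy.nsmul_iff, cocycleInvariant, AddMonoidHom.coe_mk, ZeroHom.coe_mk, smul_sum]
  exact sum_eq_zero fun x _ => nsmul_snd_one_of_fst_eq_zero hy h1 x 1

lemma mem_B3t_of_fst_eq_zero {z : C21 N × C12 N} (hz : z ∈ Wms N) (h1 : z.1 = 0)
    (he : totalInvariant N z = 0) : z ∈ B3t N := by
  obtain ⟨hz, hδ⟩ := (mem_Wms_iff z).1 hz
  have hnorm := ((mem_Z3t_iff z).1 hz).1.2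
  have hsum : N • (0 : 𝕋) = ∑ x, z.2 1 x 1 := by
    rw [smul_zero, ← he, totalInvariant_of_fst_eq_zero N h1]; rfl
  set ρ := cyclicPrimitive (z.2 1) (0 : 𝕋)
  have hρ : ∀ x y, ρ y - ρ (x + y) + ρ x = z.2 1 x y :=
    cyclicPrimitive_coboundary (fun x => hnorm 1 x 0 (by simp)) (hδ 1) hsum
  have hρN : ∀ x, N • ρ x = 0 := fun x => by
    simp only [ρ, cyclicPrimitive, smul_zero, zero_sub, smul_neg, smul_sum,
      nsmul_snd_one_of_fst_eq_zero hz h1, sum_const_zero, neg_zero]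
  refine ⟨(fun g k => -(g.val • ρ k), 0), ⟨fun g k h => ?_, fun _ _ _ => rfl⟩, Prod.ext ?_ ?_⟩
  · rcases h with rfl | rfl <;> simp [ρ]
  · funext g₁ g₂ k
    change -(g₂.val • ρ k) - -((g₁ + g₂).val • ρ k) + -(g₁.val • ρ k) = z.1 g₁ g₂ k
    rw [h1, val_add_nsmul (hρN k)]
    simp
  · funext g x y
    change (0 : 𝕋) - 0 - (-(g.val • ρ y) - -(g.val • ρ (x + y)) + -(g.val • ρ x)) = z.2 g x y
    rw [snd_eq_val_nsmul_of_fst_eq_zero N hz h1, ← hρ]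
    simp only [smul_sub, smul_add]
    abel

lemma mem_B3t_of_totalInvariant_eq_zero {z : C21 N × C12 N} (hz : z ∈ Wms N)
    (he : totalInvariant N z = 0) : z ∈ B3t N := by
  obtain ⟨t, ht, h1⟩ := exists_sub_d2t_fst_eq_zero N ((mem_Wms_iff z).1 hz).1
  have hB : z - d2t N t ∈ B3t N := by
    refine mem_B3t_of_fst_eq_zero N (sub_mem hz (d2t_mem_Wms ht)) h1 ?_
    rw [map_sub, he, totalInvariant_d2t, sub_zero]
  simpa using add_mem hB ⟨t, ht, rfl⟩

lemma zero_carryCocycle_mem_Wms {t : 𝕋} (ht : N • t = 0) :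
    ((0 : C21 N), (carryCocycle t : C12 N)) ∈ Wms N := by
  refine (mem_Wms_iff _).2 ⟨(mem_Z3t_iff _).2 ⟨⟨fun _ _ _ _ => rfl, ?_⟩, ?_, ?_⟩, ?_⟩
  · exact fun g x y h => carryCocycle_eq_zero t h
  · intros; simp
  · intro g₁ g₂ x y
    simp only [Pi.zero_apply, sub_zero, add_zero, zero_add, carryCocycle_add_left ht]
    abel
  · exact carryCocycle_cocycle t

def H3tInvariant : H3t N →+ torsionBy 𝕋 N :=
  QuotientAddGroup.lift _ (((totalInvariant N).comp (Z3t N).subtype).codRestrict _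
    fun z => totalInvariant_mem_torsionBy N z.2) <| by
      intro z hB
      obtain ⟨t, -, ht⟩ := mem_addSubgroupOf.1 hB
      refine AddMonoidHom.mem_ker.2 (Subtype.ext ?_)
      change totalInvariant N z = 0
      rw [← ht, totalInvariant_d2t]

def MSInvariant : MS N →+ torsionBy 𝕋 N := (H3tInvariant N).comp (MS N).subtype

lemma MSInvariant_bijective : Function.Bijective (MSInvariant N) := by
  refine ⟨(injective_iff_map_eq_zero _).2 ?_, fun t => ?_⟩
  · rintro ⟨_, z, hzW, rfl⟩ h
    refine Subtype.ext ((QuotientAddGroup.eq_zero_iff z).2 (mem_addSubgroupOf.2 ?_))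
    exact mem_B3t_of_totalInvariant_eq_zero N (mem_addSubgroupOf.1 hzW) (congrArg Subtype.val h)
  · have hW := zero_carryCocycle_mem_Wms N (torsionBy.nsmul_iff.1 t.2)
    refine ⟨⟨_, mk_mem_MS (z := ⟨_, ((mem_Wms_iff _).1 hW).1⟩) hW⟩, Subtype.ext ?_⟩
    change totalInvariant N (0, carryCocycle (t : 𝕋)) = t
    rw [totalInvariant_of_fst_eq_zero N rfl]
    exact sum_carryCocycle (torsionBy.nsmul_iff.1 t.2)

def MSEquiv : MS N ≃+ ZMod N := equivZModOfBijective _ (MSInvariant_bijective N)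

lemma toAddCircle_MSEquiv_mk (z : Z3t N) (hz : (QuotientAddGroup.mk z : H3t N) ∈ MS N) :
    ZMod.toAddCircle (MSEquiv N ⟨_, hz⟩) = totalInvariant N z :=
  toAddCircle_equivZModOfBijective _ _ _

end MultiplicativeStructures

section DijkgraafPasquierRoche

variable {N : ℕ}

lemma alphaW_betaW_mem_Z3t {w : C3G N} (hw : w ∈ Z3G N) : (alphaW N w, betaW N w) ∈ Z3t N := by
  obtain ⟨hw0, hc⟩ := (mem_Z3G_iff w).1 hw
  have hA : ∀ b c, w 0 b c = 0 := fun b c => hw0 0 b c (Or.inl rfl)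
  have hB : ∀ a c, w a 0 c = 0 := fun a c => hw0 a 0 c (Or.inr (Or.inl rfl))
  have hC : ∀ a b, w a b 0 = 0 := fun a b => hw0 a b 0 (Or.inr (Or.inr rfl))
  refine (mem_Z3t_iff _).2 ⟨⟨fun g₁ g₂ k h => ?_, fun g x y h => ?_⟩, fun g₁ g₂ g₃ k => ?_,
    fun g₁ g₂ x y => ?_⟩
  · rcases h with rfl | rfl | rfl <;> simp [alphaW, hA, hB, hC]
  · rcases h with rfl | rfl | rfl <;> simp [betaW, hA, hB, hC]
  · have h₁ := hc g₁ g₂ g₃ k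
    have h₂ := hc g₁ g₂ k g₃
    have h₃ := hc g₁ k g₂ g₃
    have h₄ := hc k g₁ g₂ g₃
    rw [add_comm k g₃] at h₂
    rw [add_comm k g₂] at h₃
    rw [add_comm k g₁] at h₄
    simp only [alphaW]
    linear_combination (norm := abel) h₁ - h₂ + h₃ - h₄
  · have h₁ := hc g₁ g₂ x y
    have h₂ := hc g₁ x g₂ y
    have h₃ := hc x g₁ g₂ y
    have h₄ := hc g₁ x y g₂
    have h₅ := hc x g₁ y g₂
    have h₆ := hc x y g₁ g₂
    rw [add_comm x g₂] at h₂
    rw [add_comm x g₁] at h₃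
    rw [add_comm y g₂] at h₄
    rw [add_comm x g₁, add_comm y g₂] at h₅
    rw [add_comm y g₁] at h₆
    simp only [alphaW, betaW]
    linear_combination (norm := abel) h₁ - h₂ + h₃ + h₄ - h₅ + h₆

lemma alphaW_betaW_mem_Wms {w : C3G N} (hw : w ∈ Z3G N) : (alphaW N w, betaW N w) ∈ Wms N := by
  obtain ⟨-, hc⟩ := (mem_Z3G_iff w).1 hw
  refine (mem_Wms_iff _).2 ⟨alphaW_betaW_mem_Z3t hw, fun g x y y' => ?_⟩
  have h₁ := hc g x y y'
  have h₂ := hc x g y y'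
  have h₃ := hc x y g y'
  have h₄ := hc x y y' g
  rw [add_comm x g] at h₂
  rw [add_comm y g] at h₃
  rw [add_comm y' g] at h₄
  simp only [betaW]
  linear_combination (norm := abel) h₂ + h₄ - h₁ - h₃

lemma totalInvariant_alphaW_betaW [NeZero N] (w : C3G N) :
    totalInvariant N (alphaW N w, betaW N w) = 2 • cocycleInvariant N w := by
  change ∑ x, (betaW N w 1 x 1 + alphaW N w x 1 1) = 2 • ∑ x, w 1 x 1
  rw [smul_sum]
  refine sum_congr rfl fun x _ => ?_
  simp only [alphaW, betaW]
  abel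

lemma MSEquiv_alphaW_betaW [NeZero N] {w : C3G N} (hw : w ∈ Z3G N)
    (hz : (alphaW N w, betaW N w) ∈ Z3t N)
    (hm : (QuotientAddGroup.mk (⟨_, hz⟩ : Z3t N) : H3t N) ∈ MS N) :
    MSEquiv N ⟨_, hm⟩ = 2 * H3GEquiv N (QuotientAddGroup.mk ⟨w, hw⟩) := by
  apply ZMod.toAddCircle_injective N
  rw [toAddCircle_MSEquiv_mk, totalInvariant_alphaW_betaW, ← toAddCircle_H3GEquiv_mk N ⟨w, hw⟩,
    ← map_nsmul, nsmul_eq_mul, Nat.cast_ofNat]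

end DijkgraafPasquierRoche

/-- Let `G = K = ℤ/n` act on itself by conjugation (trivially).
Under identifications `H³(ℤ/n,𝕋) ≅ ℤ/n` and `MS_G(G) ≅ ℤ/n`, the composite
`φ ∘ τ₁* : H³(G,𝕋) → MS_G(G)` (sending the class of `w` to the class of the
Dijkgraaf–Pasquier–Roche pair `(α_w, β_w)`) is multiplication by `2`. In particular,
for `n` odd this composite is an isomorphism, and for `n` even the class `n/2` maps to
zero. -/
theorem stmt_19 :
    ∃ (i₁ : H3G n ≃+ ZMod n) (i₂ : (MS n) ≃+ ZMod n),
      (∀ (w : C3G n) (hw : w ∈ Z3G n),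
        ∃ (hz : (alphaW n w, betaW n w) ∈ Z3t n)
          (hm : (QuotientAddGroup.mk (⟨(alphaW n w, betaW n w), hz⟩ : Z3t n) :
              H3t n) ∈ MS n),
          i₂ ⟨QuotientAddGroup.mk ⟨(alphaW n w, betaW n w), hz⟩, hm⟩ =
            2 * i₁ (QuotientAddGroup.mk ⟨w, hw⟩)) ∧
      (Odd n →
        (∀ y : MS n, ∃ (w : C3G n) (hw : w ∈ Z3G n)
            (hz : (alphaW n w, betaW n w) ∈ Z3t n)
            (hm : (QuotientAddGroup.mk (⟨(alphaW n w, betaW n w), hz⟩ : Z3t n) :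
                H3t n) ∈ MS n),
            (⟨QuotientAddGroup.mk ⟨(alphaW n w, betaW n w), hz⟩, hm⟩ : MS n) = y) ∧
        (∀ (w w' : C3G n) (hw : w ∈ Z3G n) (hw' : w' ∈ Z3G n)
            (hz : (alphaW n w, betaW n w) ∈ Z3t n)
            (hz' : (alphaW n w', betaW n w') ∈ Z3t n),
            (QuotientAddGroup.mk (⟨(alphaW n w, betaW n w), hz⟩ : Z3t n) : H3t n) =
              QuotientAddGroup.mk ⟨(alphaW n w', betaW n w'), hz'⟩ →
            (QuotientAddGroup.mk (⟨w, hw⟩ : Z3G n) : H3G n) =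
              QuotientAddGroup.mk ⟨w', hw'⟩)) ∧
      (Even n →
        ∀ (w : C3G n) (hw : w ∈ Z3G n) (hz : (alphaW n w, betaW n w) ∈ Z3t n),
          i₁ (QuotientAddGroup.mk ⟨w, hw⟩) = ((n / 2 : ℕ) : ZMod n) →
          (QuotientAddGroup.mk (⟨(alphaW n w, betaW n w), hz⟩ : Z3t n) : H3t n) = 0) := by
  have hMS {w : C3G n} (hw : w ∈ Z3G n) (hz : (alphaW n w, betaW n w) ∈ Z3t n) :
      (QuotientAddGroup.mk (⟨_, hz⟩ : Z3t n) : H3t n) ∈ MS n :=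
    mk_mem_MS (alphaW_betaW_mem_Wms hw)
  refine ⟨H3GEquiv n, MSEquiv n, fun w hw => ⟨_, hMS hw (alphaW_betaW_mem_Z3t hw),
    MSEquiv_alphaW_betaW hw _ _⟩, fun hodd => ?_, fun heven w hw hz h => ?_⟩
  · have h2 : IsUnit (2 : ZMod n) := by
      exact_mod_cast (ZMod.isUnit_iff_coprime 2 n).2 (Nat.coprime_two_left.2 hodd)
    refine ⟨fun y => ?_, fun w w' hw hw' hz hz' h => ?_⟩
    · obtain ⟨q, hq⟩ := (H3GEquiv n).surjective (↑h2.unit⁻¹ * MSEquiv n y)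
      obtain ⟨⟨w, hw⟩, rfl⟩ := QuotientAddGroup.mk_surjective q
      refine ⟨w, hw, alphaW_betaW_mem_Z3t hw, hMS hw _, (MSEquiv n).injective ?_⟩
      rw [MSEquiv_alphaW_betaW hw, hq, ← mul_assoc, h2.mul_val_inv, one_mul]
    · refine (H3GEquiv n).injective (h2.mul_left_cancel ?_)
      rw [← MSEquiv_alphaW_betaW hw hz (hMS hw hz),
        ← MSEquiv_alphaW_betaW hw' hz' (hMS hw' hz')]
      exact congrArg _ (Subtype.ext h)
  · have h0 : MSEquiv n ⟨_, hMS hw hz⟩ = 0 := by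
      rw [MSEquiv_alphaW_betaW hw, h, ← Nat.cast_ofNat, ← Nat.cast_mul,
        Nat.two_mul_div_two_of_even heven, ZMod.natCast_self]
    exact congrArg Subtype.val ((MSEquiv n).map_eq_zero_iff.1 h0)

end Stmt19

end
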